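/- arXiv:2207.10978 — 8 statements merged into one kernel-verified Lean document; each statement's English description precedes it below -/
import Mathlib

section
/- If the finite difference scheme with symbol γ(ξ) = Σ_{k=-r}^{p} a_k e^{ikξ} is Cauchy-stable (|γ(ξ)| ≤ 1 for all real ξ) and consistent of order at least one (Σ a_k = 1 and Σ k a_k = -λ with λ ≠ 0), then |a_0| < 1. -/
open Complex Finset
open scoped ComplexConjugate

/-! Parseval's identity for the trigonometric polynomial `γ` gives
`Σ ‖a k‖² = (2π)⁻¹ ∫₀^{2π} ‖γ‖² ≤ 1`. Consistency with `λ ≠ 0` forces `a j ≠ 0` for some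
`j ≠ 0`, and this term leaves strictly less than `1` for `‖a 0‖²`. -/

lemma integral_exp_I_int_mul (n : ℤ) :
    ∫ ξ in (0 : ℝ)..2 * Real.pi, exp (I * n * ξ)
      = if n = 0 then (2 * Real.pi : ℂ) else 0 := by
  split_ifs with hn
  · simp [hn]
  · have hc : I * (n : ℂ) ≠ 0 := by simp [hn]
    have hperiod : exp (I * n * ↑(2 * Real.pi)) = 1 := by
      rw [← exp_int_mul_two_pi_mul_I n]; push_cast; ring_nf
    rw [integral_exp_mul_complex hc, hperiod]
    simp

lemma integral_mul_conj_sum_exp_I_mul (s : Finset ℤ) (a : ℤ → ℂ) :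
    ∫ ξ in (0 : ℝ)..2 * Real.pi,
      (∑ j ∈ s, a j * exp (I * j * ξ)) * conj (∑ k ∈ s, a k * exp (I * k * ξ))
      = 2 * Real.pi * ∑ k ∈ s, (‖a k‖ ^ 2 : ℂ) := by
  have hexpand : ∀ ξ : ℝ,
      (∑ j ∈ s, a j * exp (I * j * ξ)) * conj (∑ k ∈ s, a k * exp (I * k * ξ))
        = ∑ j ∈ s, ∑ k ∈ s, a j * conj (a k) * exp (I * ↑(j - k) * ξ) := by
    intro ξ
    rw [map_sum, Finset.sum_mul_sum]
    refine Finset.sum_congr rfl fun j _ => Finset.sum_congr rfl fun k _ => ?_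
    rw [map_mul, ← exp_conj,
      show I * ↑(j - k) * ξ = I * j * ξ + conj (I * k * ξ) by simp; ring, exp_add]
    ring
  have hintegrable : ∀ j k : ℤ, IntervalIntegrable
      (fun ξ : ℝ => a j * conj (a k) * exp (I * ↑(j - k) * ξ))
      MeasureTheory.volume 0 (2 * Real.pi) :=
    fun j k => (by fun_prop : Continuous _).intervalIntegrable _ _
  simp_rw [hexpand]
  rw [intervalIntegral.integral_finsetSum fun j _ => (by fun_prop : Continuous fun ξ : ℝ =>
    ∑ k ∈ s, a j * conj (a k) * exp (I * ↑(j - k) * ξ)).intervalIntegrable _ _]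
  simp_rw [intervalIntegral.integral_finsetSum fun k _ => hintegrable _ k,
    intervalIntegral.integral_const_mul, integral_exp_I_int_mul, sub_eq_zero, mul_ite, mul_zero,
    Finset.sum_ite_eq, mul_conj, normSq_eq_norm_sq, Finset.mul_sum]
  exact Finset.sum_congr rfl fun k hk => by rw [if_pos hk]; push_cast; ring

lemma integral_norm_sq_sum_exp_I_mul (s : Finset ℤ) (a : ℤ → ℂ) :
    ∫ ξ in (0 : ℝ)..2 * Real.pi, ‖∑ k ∈ s, a k * exp (I * k * ξ)‖ ^ 2
      = 2 * Real.pi * ∑ k ∈ s, ‖a k‖ ^ 2 := by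
  apply ofReal_injective
  simp_rw [← intervalIntegral.integral_ofReal, ← normSq_eq_norm_sq, ← mul_conj,
    integral_mul_conj_sum_exp_I_mul]
  push_cast [normSq_eq_norm_sq]
  rfl

lemma sum_sq_norm_le_one_of_norm_sum_exp_I_mul_le_one (s : Finset ℤ) (a : ℤ → ℂ)
    (h : ∀ ξ : ℝ, ‖∑ k ∈ s, a k * exp (I * k * ξ)‖ ≤ 1) :
    ∑ k ∈ s, ‖a k‖ ^ 2 ≤ 1 := by
  have hmono : ∫ ξ in (0 : ℝ)..2 * Real.pi, ‖∑ k ∈ s, a k * exp (I * k * ξ)‖ ^ 2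
      ≤ ∫ ξ in (0 : ℝ)..2 * Real.pi, (1 : ℝ) :=
    intervalIntegral.integral_mono_on Real.two_pi_pos.le
      ((by fun_prop : Continuous _).intervalIntegrable _ _) intervalIntegrable_const
      fun ξ _ => pow_le_one₀ (norm_nonneg _) (h ξ)
  rw [integral_norm_sq_sum_exp_I_mul, intervalIntegral.integral_const, smul_eq_mul, mul_one,
    sub_zero] at hmono
  exact le_of_mul_le_mul_left (by linarith) Real.two_pi_pos

lemma exists_ne_zero_of_sum_int_mul_ne_zero {s : Finset ℤ} {a : ℤ → ℂ}
    (h : ∑ k ∈ s, (k : ℂ) * a k ≠ 0) : ∃ k ∈ s, k ≠ 0 ∧ a k ≠ 0 := by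
  obtain ⟨k, hk, hne⟩ := Finset.exists_ne_zero_of_sum_ne_zero h
  exact ⟨k, hk, by rintro rfl; simp at hne, right_ne_zero_of_mul hne⟩

lemma norm_lt_one_of_sum_sq_norm_le_one {s : Finset ℤ} {a : ℤ → ℂ}
    (hsum : ∑ k ∈ s, ‖a k‖ ^ 2 ≤ 1) {i j : ℤ} (hi : i ∈ s) (hj : j ∈ s)
    (hij : i ≠ j) (hj0 : a j ≠ 0) : ‖a i‖ < 1 := by
  have hpair : ‖a i‖ ^ 2 + ‖a j‖ ^ 2 ≤ ∑ k ∈ s, ‖a k‖ ^ 2 := by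
    rw [← Finset.sum_pair (f := fun k => ‖a k‖ ^ 2) hij]
    exact Finset.sum_le_sum_of_subset_of_nonneg (by simp [Finset.insert_subset_iff, hi, hj])
      fun k _ _ => sq_nonneg _
  have : 0 < ‖a j‖ ^ 2 := by positivity
  exact (sq_lt_one_iff₀ (norm_nonneg _)).mp (by linarith)

theorem abs_a0_lt_one_general (r p : ℕ) (a : ℤ → ℂ) (lam : ℝ)
    (hstab : ∀ ξ : ℝ, ‖∑ k ∈ Finset.Icc (-(r:ℤ)) (p:ℤ),
      a k * Complex.exp (Complex.I * k * ξ)‖ ≤ 1)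
    (hcons2 : ∑ k ∈ Finset.Icc (-(r:ℤ)) (p:ℤ), (k : ℂ) * a k = -(lam : ℂ))
    (hlam : lam ≠ 0) :
    ‖a 0‖ < 1 := by
  have hsum := sum_sq_norm_le_one_of_norm_sum_exp_I_mul_le_one _ _ hstab
  obtain ⟨j, hj, hj0, haj⟩ := exists_ne_zero_of_sum_int_mul_ne_zero (a := a)
    (by rw [hcons2]; exact_mod_cast neg_ne_zero.mpr hlam)
  exact norm_lt_one_of_sum_sq_norm_le_one hsum (by simp) hj (Ne.symm hj0) haj

/-- If the scheme with symbol `γ(ξ) = Σ_{k=-r}^{p} a_k e^{ikξ}` is Cauchy-stable and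
consistent of order at least one, then `|a 0| < 1`. -/
theorem abs_a0_lt_one (r p : ℕ) (a : ℤ → ℂ) (lam : ℝ)
    (hstab : ∀ ξ : ℝ, ‖∑ k ∈ Finset.Icc (-(r:ℤ)) (p:ℤ),
      a k * Complex.exp (Complex.I * k * ξ)‖ ≤ 1)
    (hcons1 : ∑ k ∈ Finset.Icc (-(r:ℤ)) (p:ℤ), a k = 1)
    (hcons2 : ∑ k ∈ Finset.Icc (-(r:ℤ)) (p:ℤ), (k : ℂ) * a k = -(lam : ℂ))
    (hlam : lam ≠ 0) :
    ‖a 0‖ < 1 :=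
  abs_a0_lt_one_general r p a lam hstab hcons2 hlam
end

section
/- For the Beam-Warming scheme with CFL parameter λ > 0, the symbol γ(ξ) = (λ(λ-1)/2) e^{-2iξ} + λ(2-λ) e^{-iξ} + ((λ-1)(λ-2)/2) satisfies |γ(ξ)|² = 1 - λ(2-λ)(λ-1)²(1-cos ξ)² for all real ξ. -/
open Complex

/-! On the unit circle `z = e^{-iξ}` the squared modulus of a real quadratic `a z² + b z + c`
depends only on `Re z = cos ξ`, since `(Im z)² = 1 - (Re z)²`; for the Beam-Warming coefficients the
resulting quadratic in `cos ξ` collapses to `1 - λ(2-λ)(λ-1)²(1-cos ξ)²`. -/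

theorem Complex.sq_norm_real_quadratic_of_norm_eq_one (a b c : ℝ) {z : ℂ} (hz : ‖z‖ = 1) :
    ‖(a : ℂ) * z ^ 2 + b * z + c‖ ^ 2
      = a ^ 2 + b ^ 2 + c ^ 2 + 2 * (a * b + b * c) * z.re
        + 2 * a * c * (2 * z.re ^ 2 - 1) := by
  have him : z.im ^ 2 = 1 - z.re ^ 2 := by rw [← sq_norm_sub_sq_re, hz, one_pow]
  rw [Complex.sq_norm, normSq_apply]
  simp only [add_re, add_im, mul_re, mul_im, ofReal_re, ofReal_im, pow_two]
  linear_combination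
    (a ^ 2 * (z.re ^ 2 + z.im ^ 2 + 1) + b ^ 2 + 2 * a * b * z.re - 2 * a * c) * him

theorem beamWarming_symbol_sq_general (lam : ℝ) (ξ : ℝ) :
    ‖((lam * (lam - 1) / 2 : ℂ) * Complex.exp (-(2 : ℂ) * Complex.I * ξ)
      + (lam * (2 - lam) : ℂ) * Complex.exp (-Complex.I * ξ)
      + ((lam - 1) * (lam - 2) / 2 : ℂ))‖ ^ 2
    = 1 - lam * (2 - lam) * (lam - 1) ^ 2 * (1 - Real.cos ξ) ^ 2 := by
  have hI : -I * ξ = (-ξ : ℝ) * I := by push_cast; ring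
  have hsq : exp (-(2 : ℂ) * I * ξ) = exp (-I * ξ) ^ 2 := by
    rw [← exp_nat_mul]; push_cast; ring_nf
  have hre : (exp (-I * ξ)).re = Real.cos ξ := by rw [hI, exp_ofReal_mul_I_re, Real.cos_neg]
  have key := sq_norm_real_quadratic_of_norm_eq_one (lam * (lam - 1) / 2) (lam * (2 - lam))
    ((lam - 1) * (lam - 2) / 2) (hI ▸ norm_exp_ofReal_mul_I (-ξ))
  push_cast at key
  rw [hsq, key, hre]
  ring

/-- For the Beam-Warming scheme with CFL parameter `λ > 0`, the squared modulus of the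
symbol satisfies `|γ(ξ)|² = 1 - λ(2-λ)(λ-1)²(1-cos ξ)²`. -/
theorem beamWarming_symbol_sq (lam : ℝ) (hlam : 0 < lam) (ξ : ℝ) :
    ‖((lam * (lam - 1) / 2 : ℂ) * Complex.exp (-(2 : ℂ) * Complex.I * ξ)
      + (lam * (2 - lam) : ℂ) * Complex.exp (-Complex.I * ξ)
      + ((lam - 1) * (lam - 2) / 2 : ℂ))‖ ^ 2
    = 1 - lam * (2 - lam) * (lam - 1) ^ 2 * (1 - Real.cos ξ) ^ 2 :=
  beamWarming_symbol_sq_general lam ξ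
end

section
/- The Beam-Warming scheme is Cauchy-stable, i.e. |γ(ξ)| ≤ 1 for all real ξ, if and only if 0 < λ ≤ 2. -/
/-!
Writing `e^{-iξ} = cos ξ - i sin ξ` and expanding, `|γ(ξ)|² = 1 - λ(2-λ)(λ-1)²(1-cos ξ)²`.
So `|γ| ≤ 1` everywhere iff `λ(2-λ)(λ-1)² ≥ 0` (test at `ξ = π`, where `1 - cos ξ = 2`),
which for `λ > 0` means `λ ≤ 2`: the factor `(λ-1)²` only vanishes at `λ = 1 ≤ 2`.
-/

open Complex

noncomputable def beamWarmingSymbol (lam ξ : ℝ) : ℂ :=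
  (lam * (lam - 1) / 2 : ℂ) * exp (-(2 : ℂ) * I * ξ) + (lam * (2 - lam) : ℂ) * exp (-I * ξ)
    + ((lam - 1) * (lam - 2) / 2 : ℂ)

lemma beamWarmingSymbol_eq (lam ξ : ℝ) :
    beamWarmingSymbol lam ξ =
      ((lam * (lam - 1) / 2 : ℝ) : ℂ) * exp ((-(2 * ξ) : ℝ) * I)
        + ((lam * (2 - lam) : ℝ) : ℂ) * exp ((-ξ : ℝ) * I)
        + (((lam - 1) * (lam - 2) / 2 : ℝ) : ℂ) := by
  unfold beamWarmingSymbol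
  push_cast
  ring_nf

lemma norm_beamWarmingSymbol_sq (lam ξ : ℝ) :
    ‖beamWarmingSymbol lam ξ‖ ^ 2
      = 1 - lam * (2 - lam) * (lam - 1) ^ 2 * (1 - Real.cos ξ) ^ 2 := by
  rw [beamWarmingSymbol_eq, Complex.sq_norm, normSq_apply]
  simp only [add_re, add_im, mul_re, mul_im, exp_ofReal_mul_I_re, exp_ofReal_mul_I_im,
    ofReal_re, ofReal_im, zero_mul, sub_zero, add_zero,
    Real.cos_neg, Real.sin_neg, Real.cos_two_mul, Real.sin_two_mul]
  linear_combination (lam * (lam - 1) * Real.cos ξ + lam * (2 - lam)) ^ 2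
    * Real.sin_sq_add_cos_sq ξ

lemma norm_beamWarmingSymbol_le_one_iff (lam ξ : ℝ) :
    ‖beamWarmingSymbol lam ξ‖ ≤ 1 ↔ 0 ≤ lam * (2 - lam) * (lam - 1) ^ 2 * (1 - Real.cos ξ) ^ 2 := by
  rw [← sq_le_one_iff₀ (norm_nonneg _), norm_beamWarmingSymbol_sq, sub_le_self_iff]

lemma forall_mul_one_sub_cos_sq_nonneg_iff (c : ℝ) :
    (∀ ξ : ℝ, 0 ≤ c * (1 - Real.cos ξ) ^ 2) ↔ 0 ≤ c := by
  refine ⟨fun h => ?_, fun hc ξ => by positivity⟩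
  have hπ := h Real.pi
  rw [Real.cos_pi] at hπ
  linarith

lemma mul_two_sub_mul_sub_one_sq_nonneg_iff {lam : ℝ} (hlam : 0 < lam) :
    0 ≤ lam * (2 - lam) * (lam - 1) ^ 2 ↔ lam ≤ 2 := by
  constructor
  · intro h
    by_contra! hlt
    have : 0 < lam * (lam - 2) * (lam - 1) ^ 2 := by
      have : 0 < lam - 1 := by linarith
      have : 0 < lam - 2 := by linarith
      positivity
    linarith
  · intro h
    have : 0 ≤ 2 - lam := by linarith
    positivity

/-- The Beam-Warming scheme is Cauchy-stable iff `0 < λ ≤ 2`. -/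
theorem beamWarming_cauchyStable_iff (lam : ℝ) (hlam : 0 < lam) :
    (∀ ξ : ℝ, ‖(lam * (lam - 1) / 2 : ℂ) * Complex.exp (-(2 : ℂ) * Complex.I * ξ)
      + (lam * (2 - lam) : ℂ) * Complex.exp (-Complex.I * ξ)
      + ((lam - 1) * (lam - 2) / 2 : ℂ)‖ ≤ 1)
    ↔ (0 < lam ∧ lam ≤ 2) := by
  change (∀ ξ : ℝ, ‖beamWarmingSymbol lam ξ‖ ≤ 1) ↔ _
  simp only [norm_beamWarmingSymbol_le_one_iff, forall_mul_one_sub_cos_sq_nonneg_iff,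
    mul_two_sub_mul_sub_one_sq_nonneg_iff hlam, hlam, true_and]
end

section
/- (Hersh's lemma, totally upwind case) Let a_{-r}, …, a_0 be complex numbers with a_{-r} ≠ 0, and let γ(θ) = Σ_{k=-r}^{0} a_k e^{ikθ} with symbol curve Γ = γ([0,2π]). If z belongs to the unbounded connected component of ℂ \ Γ, then every root κ of the characteristic equation z κ^r = Σ_{k=-r}^{0} a_k κ^{r+k} satisfies |κ| < 1. -/
open Complex Finset

/-!
Put `p(w) = Σ_{k=-r}^{0} a_k w^{-k}`, so that `γ(θ) = p(e^{-iθ})` and, for `κ ≠ 0`, the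
characteristic equation says exactly `p(κ⁻¹) = z`. Suppose `|κ⁻¹| ≤ 1`. Since `p` maps the
unit circle into `Γ ∌ z`, in fact `|κ⁻¹| < 1`, so `z` lies in the image `p(D)` of the open
unit disk, an open set by the open mapping theorem (a constant `p` would put `z` on `Γ`).
The closure of `p(D)` lies in `p(D̄)`, and `p(D̄) \ p(D) ⊆ p(∂D) ⊆ Γ`, so the connected
component of `z` in `ℂ \ Γ` stays inside `p(D)` and is bounded, a contradiction.
-/

theorem Differentiable.notMem_closedBall_of_not_isBounded_connectedComponentIn
    {f : ℂ → ℂ} (hf : Differentiable ℂ f) {Γ : Set ℂ} {c w : ℂ} {R : ℝ}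
    (hΓ : f '' Metric.sphere c R ⊆ Γ) (hfw : f w ∉ Γ)
    (hunbdd : ¬ Bornology.IsBounded (connectedComponentIn Γᶜ (f w))) :
    w ∉ Metric.closedBall c R := by
  have mem_ball {y : ℂ} (hy : y ∈ Metric.closedBall c R) (hfy : f y ∉ Γ) : y ∈ Metric.ball c R :=
    lt_of_le_of_ne hy fun h => hfy (hΓ ⟨y, h, rfl⟩)
  intro hw
  have hCΓ : connectedComponentIn Γᶜ (f w) ⊆ Γᶜ := connectedComponentIn_subset _ _
  rcases (analyticOnNhd_univ_iff_differentiable.mpr hf).is_constant_or_isOpen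
    (isPreconnected_univ (α := ℂ)) with ⟨v, hv⟩ | hopen
  · obtain ⟨p, hp⟩ := (NormedSpace.sphere_nonempty (x := c)).mpr (dist_nonneg.trans hw)
    exact hfw (by rw [hv w trivial, ← hv p trivial]; exact hΓ ⟨p, hp, rfl⟩)
  have hK : IsCompact (f '' Metric.closedBall c R) :=
    (isCompact_closedBall c R).image hf.continuous
  have hball_sub : f '' Metric.ball c R ⊆ f '' Metric.closedBall c R :=
    Set.image_mono Metric.ball_subset_closedBall
  have hC_sub : connectedComponentIn Γᶜ (f w) ⊆ f '' Metric.ball c R := by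
    refine isPreconnected_connectedComponentIn.subset_of_closure_inter_subset
      (hopen _ (Set.subset_univ _) Metric.isOpen_ball)
      ⟨f w, mem_connectedComponentIn hfw, w, mem_ball hw hfw, rfl⟩ ?_
    rintro x ⟨hx_cl, hxC⟩
    obtain ⟨y, hy, rfl⟩ := closure_minimal hball_sub hK.isClosed hx_cl
    exact ⟨y, mem_ball hy (hCΓ hxC), rfl⟩
  exact hunbdd (hK.isBounded.subset (hC_sub.trans hball_sub))

theorem exists_mem_Icc_exp_neg_I_mul_eq {w : ℂ} (hw : ‖w‖ = 1) :
    ∃ θ ∈ Set.Icc 0 (2 * Real.pi), exp (-(I * θ)) = w := by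
  have hper : Function.Periodic (fun θ : ℝ => exp (-(I * θ))) (2 * Real.pi) := fun θ => by
    simp only [ofReal_add, ofReal_mul, ofReal_ofNat]
    rw [show -(I * (θ + 2 * Real.pi)) = -(I * θ) - 2 * Real.pi * I by ring, exp_sub,
      exp_two_pi_mul_I, div_one]
  obtain ⟨θ, hθ, h⟩ := hper.exists_mem_Ico₀ Real.two_pi_pos (-arg w)
  refine ⟨θ, Set.Ico_subset_Icc_self hθ, h.symm.trans ?_⟩
  simpa [hw, mul_comm I] using norm_mul_exp_arg_mul_I w

noncomputable def symbolPolynomial (r : ℕ) (a : ℤ → ℂ) (w : ℂ) : ℂ :=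
  ∑ k ∈ Icc (-(r : ℤ)) 0, a k * w ^ (-k).toNat

section symbolPolynomial

variable (r : ℕ) (a : ℤ → ℂ)

theorem differentiable_symbolPolynomial : Differentiable ℂ (symbolPolynomial r a) := by
  unfold symbolPolynomial
  fun_prop

theorem symbolPolynomial_exp_neg_I_mul (θ : ℝ) :
    symbolPolynomial r a (exp (-(I * θ))) = ∑ k ∈ Icc (-(r : ℤ)) 0, a k * exp (I * k * θ) := by
  refine Finset.sum_congr rfl fun k hk => ?_
  have hk0 : ((-k).toNat : ℂ) = -k := by
    exact_mod_cast Int.toNat_of_nonneg (by linarith [(Finset.mem_Icc.mp hk).2])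
  rw [← exp_nat_mul, hk0]
  ring_nf

theorem symbolPolynomial_image_sphere_subset :
    symbolPolynomial r a '' Metric.sphere 0 1 ⊆ (fun θ : ℝ => ∑ k ∈ Icc (-(r : ℤ)) 0,
      a k * exp (I * k * θ)) '' Set.Icc 0 (2 * Real.pi) := by
  rintro _ ⟨w, hw, rfl⟩
  obtain ⟨θ, hθ, rfl⟩ := exists_mem_Icc_exp_neg_I_mul_eq (mem_sphere_zero_iff_norm.mp hw)
  exact ⟨θ, hθ, (symbolPolynomial_exp_neg_I_mul r a θ).symm⟩

theorem symbolPolynomial_inv_mul_pow {κ : ℂ} (hκ : κ ≠ 0) :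
    symbolPolynomial r a κ⁻¹ * κ ^ r = ∑ k ∈ Icc (-(r : ℤ)) 0, a k * κ ^ ((r : ℤ) + k).toNat := by
  rw [symbolPolynomial, Finset.sum_mul]
  refine Finset.sum_congr rfl fun k hk => ?_
  obtain ⟨hrk, hk0⟩ := Finset.mem_Icc.mp hk
  rw [mul_assoc, ← zpow_natCast, ← zpow_natCast, ← zpow_natCast, Int.toNat_of_nonneg (by omega),
    Int.toNat_of_nonneg (by omega), inv_zpow', neg_neg, ← zpow_add₀ hκ, add_comm]

end symbolPolynomial

theorem hersh_lemma_general (r : ℕ) (a : ℤ → ℂ)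
    (Γ : Set ℂ)
    (hΓ : Γ = (fun θ : ℝ => ∑ k ∈ Finset.Icc (-(r:ℤ)) 0,
      a k * Complex.exp (Complex.I * k * θ)) '' Set.Icc 0 (2 * Real.pi))
    (z : ℂ) (hz : z ∈ Γᶜ)
    (hunbdd : ¬ Bornology.IsBounded (connectedComponentIn Γᶜ z))
    (κ : ℂ)
    (hκ : z * κ ^ r = ∑ k ∈ Finset.Icc (-(r:ℤ)) 0, a k * κ ^ ((r : ℤ) + k).toNat) :
    ‖κ‖ < 1 := by
  rcases eq_or_ne κ 0 with rfl | hκ0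
  · simp
  have hroot : symbolPolynomial r a κ⁻¹ = z :=
    mul_right_cancel₀ (pow_ne_zero r hκ0) (by rw [symbolPolynomial_inv_mul_pow r a hκ0, hκ])
  subst hΓ hroot
  have hout :=
    (differentiable_symbolPolynomial r a).notMem_closedBall_of_not_isBounded_connectedComponentIn
      (symbolPolynomial_image_sphere_subset r a) hz hunbdd
  simpa [norm_inv, one_lt_inv₀ (norm_pos_iff.mpr hκ0)] using hout

/-- Hersh's lemma (totally upwind case): if `z` lies in the unbounded connected component
of the complement of the symbol curve `Γ`, then every root `κ` of the characteristic
equation `z κ^r = Σ_{k=-r}^{0} a_k κ^{r+k}` satisfies `|κ| < 1`. -/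
theorem hersh_lemma (r : ℕ) (hr : 1 ≤ r) (a : ℤ → ℂ) (ha : a (-(r:ℤ)) ≠ 0)
    (Γ : Set ℂ)
    (hΓ : Γ = (fun θ : ℝ => ∑ k ∈ Finset.Icc (-(r:ℤ)) 0,
      a k * Complex.exp (Complex.I * k * θ)) '' Set.Icc 0 (2 * Real.pi))
    (z : ℂ) (hz : z ∈ Γᶜ)
    (hunbdd : ¬ Bornology.IsBounded (connectedComponentIn Γᶜ z))
    (κ : ℂ)
    (hκ : z * κ ^ r = ∑ k ∈ Finset.Icc (-(r:ℤ)) 0, a k * κ ^ ((r : ℤ) + k).toNat) :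
    ‖κ‖ < 1 :=
  hersh_lemma_general r a Γ hΓ z hz hunbdd κ hκ
end

section
/- Let κ_1, …, κ_M be distinct nonzero complex numbers with multiplicities β_1, …, β_M summing to r, and let K_{ℓ,ℓ+r-1} be the r×r matrix whose columns are the vectors ((ℓ+i)^t κ_j^{ℓ+i})_{i=0}^{r-1} for j = 1,…,M and t = 0,…,β_j−1. Then det K_{ℓ,ℓ+r-1} = (κ_1^{β_1} ⋯ κ_M^{β_M})^ℓ · det K_{0,r-1}. -/
open Matrix Finset

/-- The "Pascal shift" matrix on the sigma index type. -/
private def pascalB {M : ℕ} (κ : Fin M → ℂ) (β : Fin M → ℕ) :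
    Matrix (Σ j : Fin M, Fin (β j)) (Σ j : Fin M, Fin (β j)) ℂ :=
  fun a b => if a.1 = b.1 then κ b.1 * ((b.2 : ℕ).choose (a.2 : ℕ) : ℂ) else 0

private lemma pascalB_det {M : ℕ} (κ : Fin M → ℂ) (β : Fin M → ℕ) :
    (pascalB κ β).det = ∏ j, κ j ^ β j := by
  have htri : (pascalB κ β).BlockTriangular Sigma.fst := by
    intro a b h
    exact if_neg h.ne'
  rw [htri.det_fintype]
  refine Finset.prod_congr rfl fun k _ => ?_
  -- reindex the square block by `Fin (β k)`
  let g : Fin (β k) ≃ {a : Σ j : Fin M, Fin (β j) // a.1 = k} :=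
    { toFun := fun t => ⟨⟨k, t⟩, rfl⟩
      invFun := fun a => Fin.cast (congrArg β a.2) a.1.2
      left_inv := fun t => rfl
      right_inv := by
        rintro ⟨⟨j, t⟩, rfl⟩
        rfl }
  rw [← Matrix.det_submatrix_equiv_self g]
  have hA : (((pascalB κ β).toSquareBlock Sigma.fst k).submatrix g g) =
      fun t' t : Fin (β k) => κ k * ((t : ℕ).choose (t' : ℕ) : ℂ) := by
    ext t' t
    simp [Matrix.toSquareBlock_def, pascalB, g]
  rw [hA]
  have hupper : Matrix.BlockTriangular
      (fun t' t : Fin (β k) => κ k * ((t : ℕ).choose (t' : ℕ) : ℂ)) id := by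
    intro i j h
    show κ k * (((j : ℕ)).choose (i : ℕ) : ℂ) = 0
    rw [Nat.choose_eq_zero_of_lt (by simpa using h)]
    simp
  rw [Matrix.det_of_upperTriangular hupper]
  simp [Nat.choose_self]

private lemma shift_one (r M : ℕ)
    (κ : Fin M → ℂ) (β : Fin M → ℕ)
    (e : (Σ j : Fin M, Fin (β j)) ≃ Fin r)
    (K : ℕ → Matrix (Fin r) (Fin r) ℂ)
    (hK : ∀ l : ℕ, ∀ (i c : Fin r),
      K l i c = ((l + (i : ℕ) : ℕ) : ℂ) ^ ((e.symm c).2 : ℕ) * κ (e.symm c).1 ^ (l + (i : ℕ)))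
    (l : ℕ) :
    (K (l + 1)).det = (∏ j, κ j ^ β j) * (K l).det := by
  have hmul : K (l + 1) = K l * ((pascalB κ β).submatrix e.symm e.symm) := by
    ext i c
    rw [Matrix.mul_apply, hK]
    have hsum : ∀ f : Fin r → ℂ, ∑ c', f c' = ∑ a : Σ j, Fin (β j), f (e a) :=
      fun f => (Equiv.sum_comp e f).symm
    rw [hsum]
    simp only [Matrix.submatrix_apply, Equiv.symm_apply_apply]
    rw [← Finset.univ_sigma_univ, Finset.sum_sigma]
    set j := (e.symm c).1 with hj
    set t := (e.symm c).2 with ht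
    rw [Finset.sum_eq_single j]
    · have hterm : ∀ t' : Fin (β j),
          K l i (e ⟨j, t'⟩) * pascalB κ β ⟨j, t'⟩ (e.symm c)
            = κ j ^ (l + (i : ℕ)) * κ j *
              (((t : ℕ).choose (t' : ℕ) : ℂ) * ((l + (i : ℕ) : ℕ) : ℂ) ^ (t' : ℕ)) := by
        intro t'
        rw [hK]
        have h2 : e.symm (e ⟨j, t'⟩) = ⟨j, t'⟩ := e.symm_apply_apply _
        rw [h2]
        have : pascalB κ β ⟨j, t'⟩ (e.symm c) = κ j * ((t : ℕ).choose (t' : ℕ) : ℂ) := by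
          simp [pascalB, ← hj, ← ht]
        rw [this]
        ring
      rw [Finset.sum_congr rfl fun t' _ => hterm t', ← Finset.mul_sum]
      have hx : ∑ t' : Fin (β j), ((t : ℕ).choose (t' : ℕ) : ℂ) *
          ((l + (i : ℕ) : ℕ) : ℂ) ^ (t' : ℕ)
          = (((l + (i : ℕ) : ℕ) : ℂ) + 1) ^ (t : ℕ) := by
        rw [Fin.sum_univ_eq_sum_range (fun k => ((t : ℕ).choose k : ℂ) *
          ((l + (i : ℕ) : ℕ) : ℂ) ^ k)]
        rw [← Finset.sum_subset (Finset.range_subset_range.2 t.2)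
          (fun k _ hk => by
            rw [Nat.choose_eq_zero_of_lt (by simpa using hk)]
            simp)]
        rw [add_pow]
        refine Finset.sum_congr rfl fun k _ => ?_
        ring
      rw [hx]
      have hcast : (((l + 1 + (i : ℕ) : ℕ)) : ℂ) = ((l + (i : ℕ) : ℕ) : ℂ) + 1 := by
        push_cast; ring
      rw [hcast]
      have hexp : l + 1 + (i : ℕ) = l + (i : ℕ) + 1 := by omega
      rw [hexp, pow_succ]
      ring
    · intro j' _ hj'
      apply Finset.sum_eq_zero
      intro t' _
      have : pascalB κ β ⟨j', t'⟩ (e.symm c) = 0 := if_neg hj'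
      rw [this, mul_zero]
    · intro h
      exact absurd (Finset.mem_univ j) h
  rw [hmul, Matrix.det_mul, Matrix.det_submatrix_equiv_self e.symm, pascalB_det]
  ring

/-- Shift identity for the confluent Vandermonde matrix with several distinct nonzero
roots `κ_1,…,κ_M` of multiplicities `β_1,…,β_M` summing to `r`:
`det K_{ℓ,ℓ+r-1} = (κ_1^{β_1} ⋯ κ_M^{β_M})^ℓ · det K_{0,r-1}`. -/
theorem confluent_shift_det_multi (r M : ℕ) (hr : 1 ≤ r)
    (κ : Fin M → ℂ) (hκ0 : ∀ j, κ j ≠ 0) (hinj : Function.Injective κ)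
    (β : Fin M → ℕ) (hβ : ∑ j, β j = r)
    (e : (Σ j : Fin M, Fin (β j)) ≃ Fin r) (ℓ : ℕ)
    (K : ℕ → Matrix (Fin r) (Fin r) ℂ)
    (hK : ∀ l : ℕ, ∀ (i c : Fin r),
      K l i c = ((l + (i : ℕ) : ℕ) : ℂ) ^ ((e.symm c).2 : ℕ) * κ (e.symm c).1 ^ (l + (i : ℕ))) :
    (K ℓ).det = (∏ j, κ j ^ β j) ^ ℓ * (K 0).det := by
  induction ℓ with
  | zero => simp
  | succ l ih =>
    rw [shift_one r M κ β e K hK l, ih, pow_succ]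
    ring
end

section
/- Under the hypotheses |a_0| < 1, a_{-r} ≠ 0, for any z with |z| ≥ 1 and any integer ℓ ≥ 0, the ratio of confluent Vandermonde determinants built from the roots of the characteristic equation z κ^r = Σ_{k=-r}^{0} a_k κ^{r+k} satisfies det K_{ℓ,ℓ+r-1}(z) / det K_{0,r-1}(z) = (-1)^{ℓr} (a_{-r}/(a_0 - z))^ℓ. -/
open Matrix Polynomial Finset

/-!
With `θ = X · d/dX` one has `n ^ t * κ ^ n = eval κ (θ ^ t (X ^ n))`, and `θ ^ t` vanishes at `κ`
on multiples of `(X - κ) ^ (t + 1)`. Hence every column `n ↦ n ^ t * κ_j ^ n` (`t < β_j`) of `K`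
solves the linear recurrence with characteristic polynomial `p = ∏ (X - κ_j) ^ β_j`. Shifting the
window of rows by one replaces the last row by a combination of the others, so the determinant
is multiplied by `(-1) ^ r * p(0)`, and `p(0) = a_{-r} / (a_0 - z)` by comparing constant
coefficients in the factorization. The base determinant is a confluent Vandermonde determinant:
a vector in its left kernel gives a polynomial of degree `< r` on which `θ ^ t` vanishes at `κ_j`
for all `t < β_j`; conversely this forces divisibility by `(X - κ_j) ^ β_j` when `κ_j ≠ 0`, so the
polynomial is divisible by `p` and therefore zero.
-/

namespace Polynomial

variable {R : Type*} [CommRing R]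

noncomputable def theta : Module.End R R[X] := LinearMap.mulLeft R X ∘ₗ derivative

theorem theta_apply (p : R[X]) : theta p = X * derivative p := rfl

theorem theta_pow_monomial (t n : ℕ) (a : R) :
    (theta ^ t) (monomial n a) = monomial n ((n : R) ^ t * a) := by
  induction t with
  | zero => simp
  | succ t ih =>
    rw [pow_succ', Module.End.mul_apply, ih, theta_apply, derivative_monomial]
    rcases n with _ | n
    · simp
    · rw [X_mul_monomial]
      push_cast
      congr 1; ring

theorem eval_theta_pow_sum_monomial {ι : Type*} (s : Finset ι) (e : ι → ℕ) (c : ι → R)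
    (x : R) (t : ℕ) :
    eval x ((theta ^ t) (∑ i ∈ s, monomial (e i) (c i))) =
      ∑ i ∈ s, c i * (e i : R) ^ t * x ^ e i := by
  simp only [map_sum, theta_pow_monomial, eval_finsetSum, eval_monomial]
  exact Finset.sum_congr rfl fun i _ => by ring

theorem pow_sub_dvd_theta_pow_of_pow_dvd {p q : R[X]} {n : ℕ} (t : ℕ) (h : q ^ n ∣ p) :
    q ^ (n - t) ∣ (theta ^ t) p := by
  induction t with
  | zero => simpa
  | succ t ih =>
    rw [pow_succ', Module.End.mul_apply, theta_apply, Nat.sub_succ]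
    exact (pow_sub_one_dvd_derivative_of_pow_dvd ih).mul_left X

theorem eval_theta_pow_eq_zero_of_pow_dvd {κ : R} {p : R[X]} {n t : ℕ} (ht : t < n)
    (h : (X - C κ) ^ n ∣ p) : eval κ ((theta ^ t) p) = 0 :=
  dvd_iff_isRoot.1 <| (dvd_pow_self _ (Nat.sub_ne_zero_of_lt ht)).trans
    (pow_sub_dvd_theta_pow_of_pow_dvd t h)

theorem eval_theta_pow_X_sub_C_pow_mul (κ : R) (m : ℕ) (g : R[X]) :
    eval κ ((theta ^ m) ((X - C κ) ^ m * g)) = (m.factorial : R) * κ ^ m * eval κ g := by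
  induction m generalizing g with
  | zero => simp
  | succ m ih =>
    have hstep : theta ((X - C κ) ^ (m + 1) * g)
        = (X - C κ) ^ m * (C ((m : R) + 1) * X * g + X * (X - C κ) * derivative g) := by
      rw [theta_apply, derivative_mul, derivative_pow]
      simp only [derivative_X_sub_C, Nat.add_sub_cancel, Nat.cast_add, Nat.cast_one, C_add, C_1]
      ring
    rw [pow_succ, Module.End.mul_apply, hstep, ih]
    simp only [eval_add, eval_mul, eval_C, eval_X, eval_sub, sub_self, Nat.factorial_succ]
    push_cast
    ring

theorem pow_dvd_of_eval_theta_pow_eq_zero [IsDomain R] [CharZero R] {κ : R} (hκ : κ ≠ 0)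
    {q : R[X]} {b : ℕ} (h : ∀ t < b, eval κ ((theta ^ t) q) = 0) : (X - C κ) ^ b ∣ q := by
  induction b with
  | zero => simp
  | succ b ih =>
    obtain ⟨s, rfl⟩ := ih fun t ht => h t (by omega)
    have hs : eval κ s = 0 := by
      have := h b (by omega)
      rw [eval_theta_pow_X_sub_C_pow_mul] at this
      simpa [Nat.factorial_ne_zero, hκ] using this
    obtain ⟨w, rfl⟩ := dvd_iff_isRoot.2 hs
    exact ⟨w, by ring⟩

end Polynomial

/-- The paper's `K_{l, l+n-1}`, with the `n` sequences `f c` as columns. -/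
def windowMatrix {R : Type*} {n : ℕ} (f : Fin n → ℕ → R) (l : ℕ) : Matrix (Fin n) (Fin n) R :=
  of fun i c => f c (l + i)

namespace LinearRecurrence

variable {R : Type*} [CommRing R]

theorem charPoly_mk_neg_coeff {p : R[X]} (hp : p.Monic) {n : ℕ} (hn : p.natDegree = n) :
    (⟨n, fun i => -p.coeff i⟩ : LinearRecurrence R).charPoly = p := by
  subst hn
  conv_rhs => rw [hp.as_sum]
  simp only [charPoly, monomial_neg, Finset.sum_neg_distrib, sub_neg_eq_add,
    C_mul_X_pow_eq_monomial]
  rw [← C_mul_X_pow_eq_monomial, C_1, one_mul,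
    Fin.sum_univ_eq_sum_range (fun i => monomial i (p.coeff i))]

theorem charPoly_coeff_zero_succ {n : ℕ} (coeffs : Fin (n + 1) → R) :
    (⟨n + 1, coeffs⟩ : LinearRecurrence R).charPoly.coeff 0 = -coeffs 0 := by
  simp [charPoly, Fin.sum_univ_succ, coeff_monomial]

theorem isSolution_natCast_pow_mul_pow (E : LinearRecurrence R) {κ : R} {t : ℕ}
    (h : (X - C κ) ^ (t + 1) ∣ E.charPoly) : E.IsSolution fun n => (n : R) ^ t * κ ^ n := by
  intro m
  have hX : X ^ m * E.charPoly =
      monomial (E.order + m) 1 - ∑ i : Fin E.order, monomial (i + m) (E.coeffs i) := by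
    simp only [charPoly, mul_sub, Finset.mul_sum, X_pow_mul_monomial]
  have := eval_theta_pow_eq_zero_of_pow_dvd (Nat.lt_succ_self t) (h.mul_left (X ^ m))
  rw [hX, map_sub, eval_sub, eval_theta_pow_sum_monomial, theta_pow_monomial, eval_monomial,
    sub_eq_zero] at this
  simp only [add_comm m, ← mul_assoc]
  simpa only [mul_one] using this

/-- The rotation moves rows `1, …, n` of the old window up; its new last row is, by the
recurrence, a combination of old rows in which only row `0` survives in the determinant. -/
theorem det_windowMatrix_succ (E : LinearRecurrence R) (f : Fin E.order → ℕ → R)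
    (hf : ∀ c, E.IsSolution (f c)) (l : ℕ) :
    (windowMatrix f (l + 1)).det =
      (-1) ^ E.order * E.charPoly.coeff 0 * (windowMatrix f l).det := by
  obtain ⟨_ | n, coeffs⟩ := E
  · simp [charPoly]
  set W := windowMatrix f l
  set σ := finRotate (n + 1)
  have hrot : ∀ i, i ≠ Fin.last n → ((σ i : Fin (n + 1)) : ℕ) = i + 1 := fun i hi => by
    rw [coe_finRotate, if_neg hi]
  have hshift : windowMatrix f (l + 1) =
      (W.submatrix σ id).updateRow (Fin.last n) (∑ i, coeffs (σ i) • W.submatrix σ id i) := by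
    ext i c
    by_cases hi : i = Fin.last n
    · subst hi
      rw [updateRow_self, Finset.sum_apply]
      simp only [Pi.smul_apply, submatrix_apply, id, smul_eq_mul]
      rw [Equiv.sum_comp σ fun k => coeffs k * W k c]
      simp only [W, windowMatrix, of_apply, Fin.val_last]
      rw [show l + 1 + n = l + (n + 1) by omega]
      exact hf c l
    · simp only [updateRow_ne hi, W, windowMatrix, submatrix_apply, of_apply, id, hrot i hi]
      congr 1; omega
  rw [hshift, det_updateRow_sum, det_permute, sign_finRotate]
  simp only [σ, finRotate_last, smul_eq_mul, Nat.add_sub_cancel, charPoly_coeff_zero_succ]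
  push_cast
  ring

theorem det_windowMatrix (E : LinearRecurrence R) (f : Fin E.order → ℕ → R)
    (hf : ∀ c, E.IsSolution (f c)) (l : ℕ) :
    (windowMatrix f l).det =
      ((-1) ^ E.order * E.charPoly.coeff 0) ^ l * (windowMatrix f 0).det := by
  induction l with
  | zero => simp
  | succ l ih => rw [det_windowMatrix_succ E f hf, ih]; ring

end LinearRecurrence

theorem det_windowMatrix_confluent_ne_zero {K : Type*} [Field K] [CharZero K] {M r : ℕ}
    {κ : Fin M → K} (hinj : Function.Injective κ) {β : Fin M → ℕ} (hβ : ∑ j, β j = r)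
    (hκ : ∀ j, β j ≠ 0 → κ j ≠ 0) (e : (Σ j : Fin M, Fin (β j)) ≃ Fin r) :
    (windowMatrix (fun c n => (n : K) ^ ((e.symm c).2 : ℕ) * κ (e.symm c).1 ^ n) 0).det ≠ 0 := by
  classical
  intro h0
  obtain ⟨v, hv, hvW⟩ := exists_vecMul_eq_zero_iff.2 h0
  set q : K[X] := ∑ i : Fin r, C (v i) * X ^ (i : ℕ) with hq
  have hroots : ∀ j, ∀ t < β j, eval (κ j) ((theta ^ t) q) = 0 := by
    intro j t ht
    have := congrFun hvW (e ⟨j, t, ht⟩)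
    simp only [vecMul, dotProduct, windowMatrix, of_apply] at this
    rw [Equiv.symm_apply_apply] at this
    simpa only [hq, C_mul_X_pow_eq_monomial, eval_theta_pow_sum_monomial, zero_add, mul_assoc,
      Pi.zero_apply] using this
  have hdvd : ∏ j, (X - C (κ j)) ^ β j ∣ q := by
    refine Finset.prod_dvd_of_coprime
      (fun i _ j _ hij => ((pairwise_coprime_X_sub_C hinj) hij).pow) fun j _ => ?_
    rcases eq_or_ne (β j) 0 with hb | hb
    · simp [hb]
    · exact pow_dvd_of_eval_theta_pow_eq_zero (hκ j hb) (hroots j)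
  have hdeg : (∏ j, (X - C (κ j)) ^ β j).degree = (r : WithBot ℕ) := by
    rw [degree_prod]
    simp [← hβ]
  have hq0 : q = 0 := eq_zero_of_dvd_of_degree_lt hdvd (hdeg ▸ degree_sum_fin_lt v)
  refine hv (funext fun i => ?_)
  simpa [hq, finsetSum_coeff, coeff_C_mul, coeff_X_pow, Fin.val_inj] using congrArg (coeff · i) hq0

theorem det_quotient_identity_general (r M : ℕ) (hr : 1 ≤ r) (a : ℤ → ℂ)
    (ha : a (-(r:ℤ)) ≠ 0)
    (z : ℂ)
    (κ : Fin M → ℂ) (hinj : Function.Injective κ)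
    (β : Fin M → ℕ) (hβ : ∑ j, β j = r)
    (hfact : (∑ k ∈ Finset.Icc (-(r:ℤ)) 0, C (a k) * X ^ ((r : ℤ) + k).toNat)
        - C z * X ^ r
      = C (a 0 - z) * ∏ j, (X - C (κ j)) ^ β j)
    (e : (Σ j : Fin M, Fin (β j)) ≃ Fin r) (ℓ : ℕ)
    (K : ℕ → Matrix (Fin r) (Fin r) ℂ)
    (hK : ∀ l : ℕ, ∀ (i c : Fin r),
      K l i c = ((l + (i : ℕ) : ℕ) : ℂ) ^ ((e.symm c).2 : ℕ) * κ (e.symm c).1 ^ (l + (i : ℕ))) :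
    (K ℓ).det / (K 0).det = (-1) ^ (ℓ * r) * (a (-(r:ℤ)) / (a 0 - z)) ^ ℓ := by
  set p := ∏ j, (X - C (κ j)) ^ β j
  have hmonic : p.Monic := monic_prod_of_monic _ _ fun j _ => (monic_X_sub_C _).pow _
  have hdeg : p.natDegree = r := by
    rw [natDegree_prod_of_monic _ _ fun j _ => (monic_X_sub_C _).pow _]
    simp [hβ]
  have hvieta : a (-r) = (a 0 - z) * p.coeff 0 := by
    have h := congrArg (coeff · 0) hfact
    simp only [coeff_sub, finsetSum_coeff, coeff_C_mul, coeff_X_pow, mul_ite, mul_one,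
      mul_zero] at h
    rwa [Finset.sum_eq_single_of_mem (-(r : ℤ)) (by simp)
      (fun k hk hne => if_neg (by simp at hk; omega)), if_pos (by simp), if_neg (by omega),
      sub_zero] at h
  have haz : a 0 - z ≠ 0 := left_ne_zero_of_mul (hvieta ▸ ha)
  have hp0 : p.coeff 0 ≠ 0 := right_ne_zero_of_mul (hvieta ▸ ha)
  have hκ : ∀ j, β j ≠ 0 → κ j ≠ 0 := fun j hβj hκj => hp0 <| by
    rw [coeff_zero_eq_eval_zero, eval_prod]
    exact prod_eq_zero (mem_univ j) (by simp [hκj, hβj])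
  set E : LinearRecurrence ℂ := ⟨r, fun i => -p.coeff i⟩
  have hE : E.charPoly = p := LinearRecurrence.charPoly_mk_neg_coeff hmonic hdeg
  set f : Fin r → ℕ → ℂ := fun c n => (n : ℂ) ^ ((e.symm c).2 : ℕ) * κ (e.symm c).1 ^ n
  have hf : ∀ c, E.IsSolution (f c) := fun c => E.isSolution_natCast_pow_mul_pow <|
    hE ▸ (pow_dvd_pow _ (e.symm c).2.isLt).trans (dvd_prod_of_mem _ (mem_univ _))
  have hKf : K = windowMatrix f := funext fun l => Matrix.ext fun i c => hK l i c
  rw [hKf, E.det_windowMatrix f hf ℓ, hE,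
    mul_div_cancel_right₀ _ (det_windowMatrix_confluent_ne_zero hinj hβ hκ e), hvieta,
    mul_div_cancel_left₀ _ haz, mul_pow, pow_mul']

/-- Determinant-quotient identity: for `|z| ≥ 1`, `|a 0| < 1`, `a_{-r} ≠ 0`, if
`κ_1,…,κ_M` (multiplicities `β_j`, summing to `r`) are the roots of the characteristic
polynomial, then `det K_{ℓ,ℓ+r-1}(z) / det K_{0,r-1}(z) = (-1)^{ℓr} (a_{-r}/(a_0-z))^ℓ`. -/
theorem det_quotient_identity (r M : ℕ) (hr : 1 ≤ r) (a : ℤ → ℂ)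
    (ha : a (-(r:ℤ)) ≠ 0) (ha0 : ‖a 0‖ < 1)
    (z : ℂ) (hz : 1 ≤ ‖z‖)
    (κ : Fin M → ℂ) (hinj : Function.Injective κ)
    (β : Fin M → ℕ) (hβ : ∑ j, β j = r)
    (hfact : (∑ k ∈ Finset.Icc (-(r:ℤ)) 0, C (a k) * X ^ ((r : ℤ) + k).toNat)
        - C z * X ^ r
      = C (a 0 - z) * ∏ j, (X - C (κ j)) ^ β j)
    (e : (Σ j : Fin M, Fin (β j)) ≃ Fin r) (ℓ : ℕ)
    (K : ℕ → Matrix (Fin r) (Fin r) ℂ)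
    (hK : ∀ l : ℕ, ∀ (i c : Fin r),
      K l i c = ((l + (i : ℕ) : ℕ) : ℂ) ^ ((e.symm c).2 : ℕ) * κ (e.symm c).1 ^ (l + (i : ℕ))) :
    (K ℓ).det / (K 0).det = (-1) ^ (ℓ * r) * (a (-(r:ℤ)) / (a 0 - z)) ^ ℓ :=
  det_quotient_identity_general r M hr a ha z κ hinj β hβ hfact e ℓ K hK
end

section
/- Let a_{-r}, …, a_0 ∈ ℂ with a_{-r} ≠ 0 and |a_0| < 1, let N > r ≥ 1 and let B ∈ M_{r,N}(ℂ) with B[1:r,1:r] invertible. For each z with |z| ≥ 1, there exists a matrix C(z) ∈ M_r(ℂ), with entries polynomial in z, such that B U = (0 | C(z)) U for every vector U ∈ ℂ^N satisfying the recurrence a_{-r} U_j + a_{-r+1} U_{j+1} + ⋯ + (a_0 − z) U_{j+r} = 0 for 1 ≤ j ≤ N − r, and moreover deg_z det C(z) = N − r. -/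
/-!
Stack the `N - r` interior equations, with `z` an indeterminate, on top of the `r` rows of `B`
into an `N × N` matrix `M` over `ℂ[z]`, and split the unknowns into `U₀, …, U_{N-r-1}` and the
last `r`. The upper-left block `T` is upper triangular with diagonal `a_{-r}`, hence invertible
over `ℂ[z]`, so the Schur complement `C = B₂ - B₁ T⁻¹ A` of `T` has polynomial entries, and on
solutions of the recurrence eliminating the first unknowns gives `B U = C(z) (U_{N-r}, …, U_{N-1})`.
By the Schur determinant formula `det M = a_{-r}^{N-r} det C`. Only the interior rows involve `z`,
each linearly through `-z U_{j+r}`, so `det M` has degree at most `N - r`, and its coefficient of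
`z^{N-r}` is the determinant of the negated shift rows stacked on `B`; up to permutations this is
block triangular with diagonal blocks `B[1:r,1:r]` and `-1`, hence nonzero.
-/

open Matrix Polynomial Finset

namespace Matrix

variable {ι κ R : Type*} [Fintype ι] [DecidableEq ι] [Fintype κ] [DecidableEq κ] [CommRing R]

theorem det_submatrix_equiv_equiv (e f : κ ≃ ι) (A : Matrix ι ι R) :
    (A.submatrix e f).det = Equiv.Perm.sign (f.trans e.symm) * A.det := by
  have : A.submatrix e f = (A.submatrix e e).submatrix id (f.trans e.symm) := by ext; simp
  rw [this, det_permute', det_submatrix_equiv_self]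

theorem natDegree_det_X_smul_add_C_eq (s : Finset ι) (A B : Matrix ι ι R)
    (hA : ∀ i ∉ s, A i = 0) (hlead : (of fun i => if i ∈ s then A i else B i).det ≠ 0) :
    ((X : R[X]) • A.map C + B.map C).det.natDegree = #s := by
  -- Multiplying the rows outside `s` by `X` reduces this to `coeff_det_X_add_C_card`.
  set A' : Matrix ι ι R := of fun i => if i ∈ s then A i else B i
  set B' : Matrix ι ι R := of fun i => if i ∈ s then B i else 0
  set D : Matrix ι ι R[X] := diagonal fun i => if i ∈ s then 1 else X
  have hscale : D * ((X : R[X]) • A.map C + B.map C) = (X : R[X]) • A'.map C + B'.map C := by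
    ext i j
    by_cases hi : i ∈ s <;> simp [D, A', B', hi, hA i]
  have hdetD : D.det = X ^ #sᶜ := by
    rw [det_diagonal, prod_ite, prod_const_one, one_mul, prod_const, filter_not, filter_mem_eq_inter,
      univ_inter, compl_eq_univ_sdiff]
  have hcoeff (m : ℕ) : ((X : R[X]) • A.map C + B.map C).det.coeff m
      = ((X : R[X]) • A'.map C + B'.map C).det.coeff (m + #sᶜ) := by
    rw [← hscale, det_mul, mul_comm, hdetD, coeff_mul_X_pow]
  have hcard : #s + #sᶜ = Fintype.card ι := card_add_card_compl s
  refine natDegree_eq_of_le_of_coeff_ne_zero ?_ ?_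
  · rw [natDegree_le_iff_coeff_eq_zero]
    intro m hm
    rw [hcoeff]
    exact coeff_eq_zero_of_natDegree_lt ((natDegree_det_X_add_C_le _ _).trans_lt (by omega))
  · rwa [hcoeff, hcard, coeff_det_X_add_C_card]

theorem mulVec_add_mulVec_eq_schur {l m k : Type*} [Fintype m] [DecidableEq m] [Fintype k]
    {T T' : Matrix m m R} {A : Matrix m k R} (B₁ : Matrix l m R) (B₂ : Matrix l k R)
    (hT : T' * T = 1) {x : m → R} {y : k → R} (h : T *ᵥ x + A *ᵥ y = 0) :
    B₁ *ᵥ x + B₂ *ᵥ y = (B₂ - B₁ * T' * A) *ᵥ y := by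
  have hx : x = -((T' * A) *ᵥ y) := by
    rw [← one_mulVec x, ← hT, ← mulVec_mulVec, eq_neg_of_add_eq_zero_left h, mulVec_neg,
      mulVec_mulVec]
  rw [hx, sub_mulVec, mulVec_neg, Matrix.mul_assoc, ← mulVec_mulVec y B₁ (T' * A)]
  abel

section Schur

variable {m k : Type*} [Fintype m] [DecidableEq m] [Fintype k]

noncomputable def schurCompl₁₁ (M : Matrix (m ⊕ k) (m ⊕ k) R) : Matrix k k R :=
  M.toBlocks₂₂ - M.toBlocks₂₁ * M.toBlocks₁₁⁻¹ * M.toBlocks₁₂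

theorem det_eq_det_toBlocks₁₁_mul_det_schurCompl₁₁ [DecidableEq k] (M : Matrix (m ⊕ k) (m ⊕ k) R)
    (h : IsUnit M.toBlocks₁₁.det) : M.det = M.toBlocks₁₁.det * M.schurCompl₁₁.det := by
  let := M.toBlocks₁₁.invertibleOfIsUnitDet h
  calc M.det = (fromBlocks M.toBlocks₁₁ M.toBlocks₁₂ M.toBlocks₂₁ M.toBlocks₂₂).det := by
        rw [fromBlocks_toBlocks]
    _ = _ := by rw [det_fromBlocks₁₁, invOf_eq_nonsing_inv]; rfl

theorem mulVec_inr_eq_map_schurCompl₁₁ {S : Type*} [CommRing S] (f : R →+* S)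
    (M : Matrix (m ⊕ k) (m ⊕ k) R) (hM : IsUnit M.toBlocks₁₁.det) (v : m ⊕ k → S)
    (hv : ∀ i, (M.map f *ᵥ v) (Sum.inl i) = 0) :
    (fun j => (M.map f *ᵥ v) (Sum.inr j)) = M.schurCompl₁₁.map f *ᵥ (v ∘ Sum.inr) := by
  have hinv : M.toBlocks₁₁⁻¹.map f * (M.map f).toBlocks₁₁ = 1 := by
    rw [show (M.map f).toBlocks₁₁ = M.toBlocks₁₁.map f from rfl, ← Matrix.map_mul,
      nonsing_inv_mul _ hM, Matrix.map_one _ f.map_zero f.map_one]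
  have hsplit := fromBlocks_mulVec (M.map f).toBlocks₁₁ (M.map f).toBlocks₁₂
    (M.map f).toBlocks₂₁ (M.map f).toBlocks₂₂ v
  rw [fromBlocks_toBlocks] at hsplit
  have hschur : M.schurCompl₁₁.map f = (M.map f).toBlocks₂₂ -
      (M.map f).toBlocks₂₁ * M.toBlocks₁₁⁻¹.map f * (M.map f).toBlocks₁₂ := by
    rw [schurCompl₁₁, Matrix.map_sub _ (map_sub f), Matrix.map_mul, Matrix.map_mul]
    rfl
  rw [hschur, hsplit, ← mulVec_add_mulVec_eq_schur _ _ hinv (funext fun i => ?_)]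
  · rfl
  · simpa [hsplit] using hv i

end Schur

end Matrix

section Recurrence

variable {R : Type*} [CommRing R] {N r : ℕ}

def shiftMatrix (n N k : ℕ) : Matrix (Fin n) (Fin N) R :=
  of fun i j => if (j : ℕ) = i + k then 1 else 0

theorem shiftMatrix_mulVec_apply {n k : ℕ} (h : n + k ≤ N) (U : Fin N → R) (i : Fin n) :
    (shiftMatrix n N k *ᵥ U) i = U ⟨i + k, by omega⟩ := by
  rw [mulVec, dotProduct, sum_eq_single ⟨i + k, by omega⟩]
  · simp [shiftMatrix]
  · intro j _ hj
    simp [shiftMatrix, show (j : ℕ) ≠ i + k from fun h' => hj (Fin.ext h')]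
  · simp

def recurrenceMatrix (N r : ℕ) (a : ℤ → R) (z : R) : Matrix (Fin (N - r)) (Fin N) R :=
  ∑ k : Fin r, a ((k : ℤ) - r) • shiftMatrix (N - r) N k + (a 0 - z) • shiftMatrix (N - r) N r

theorem recurrenceMatrix_mulVec_apply (hrN : r ≤ N) (a : ℤ → R) (z : R) (U : Fin N → R)
    (i : Fin (N - r)) :
    (recurrenceMatrix N r a z *ᵥ U) i =
      ∑ k : Fin r, a ((k : ℤ) - r) * U ⟨i + k, by omega⟩ + (a 0 - z) * U ⟨i + r, by omega⟩ := by
  simp only [recurrenceMatrix, add_mulVec, Matrix.sum_mulVec, smul_mulVec, Pi.add_apply,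
    Finset.sum_apply, Pi.smul_apply, smul_eq_mul, shiftMatrix_mulVec_apply (by omega : N - r + r ≤ N)]
  congr 1
  refine sum_congr rfl fun k _ => ?_
  rw [shiftMatrix_mulVec_apply (by omega)]

theorem recurrenceMatrix_apply (a : ℤ → R) (z : R) (i : Fin (N - r)) (j : Fin N) :
    recurrenceMatrix N r a z i j =
      ∑ k : Fin r, (if (j : ℕ) = i + k then a ((k : ℤ) - r) else 0) +
        if (j : ℕ) = i + r then a 0 - z else 0 := by
  simp [recurrenceMatrix, shiftMatrix, Matrix.sum_apply]

end Recurrence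

section Reduction

variable {K : Type*} [Field K] {N r : ℕ}

def splitCols (h : r ≤ N) : Fin (N - r) ⊕ Fin r ≃ Fin N :=
  finSumFinEquiv.trans (finCongr (Nat.sub_add_cancel h))

@[simp]
theorem splitCols_inl_val (h : r ≤ N) (j : Fin (N - r)) : (splitCols h (Sum.inl j) : ℕ) = j := by
  simp [splitCols]

@[simp]
theorem splitCols_inr_val (h : r ≤ N) (k : Fin r) :
    (splitCols h (Sum.inr k) : ℕ) = N - r + k := by
  simp [splitCols]

theorem map_eval_recurrenceMatrix (a : ℤ → K) (z : K) :
    (recurrenceMatrix N r (C ∘ a) X).map (eval z) = recurrenceMatrix N r a z := by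
  ext i j
  simp [recurrenceMatrix_apply, eval_finsetSum, apply_ite (eval z)]

theorem recurrenceMatrix_C_X (a : ℤ → K) :
    recurrenceMatrix N r (C ∘ a) X =
      (X : K[X]) • (-shiftMatrix (N - r) N r).map C + (recurrenceMatrix N r a 0).map C := by
  ext i j : 1
  simp only [recurrenceMatrix_apply, Matrix.add_apply, Matrix.smul_apply, map_apply,
    Matrix.neg_apply, shiftMatrix, of_apply, map_add, map_sum, apply_ite C, map_zero,
    Function.comp_apply, smul_eq_mul]
  split_ifs
  · rw [C_neg, C_1, sub_zero, mul_neg_one]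
    ring
  · simp

/-- The columns are ordered as `(U₀, …, U_{N-r-1} | U_{N-r}, …, U_{N-1})`. -/
noncomputable def boundaryRecurrenceMatrix (h : r ≤ N) (a : ℤ → K)
    (B : Matrix (Fin r) (Fin N) K) : Matrix (Fin (N - r) ⊕ Fin r) (Fin (N - r) ⊕ Fin r) K[X] :=
  (fromRows (recurrenceMatrix N r (C ∘ a) X) (B.map C)).submatrix id (splitCols h)

theorem det_toBlocks₁₁_boundaryRecurrenceMatrix (hr : 1 ≤ r) (h : r ≤ N) (a : ℤ → K)
    (B : Matrix (Fin r) (Fin N) K) :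
    (boundaryRecurrenceMatrix h a B).toBlocks₁₁.det = C (a (-r)) ^ (N - r) := by
  have htri : (boundaryRecurrenceMatrix h a B).toBlocks₁₁.BlockTriangular id := by
    intro i j hji
    have : (j : ℕ) < i := hji
    simp only [toBlocks₁₁, boundaryRecurrenceMatrix, submatrix_apply, id_eq, fromRows_apply_inl,
      recurrenceMatrix_apply, splitCols_inl_val, of_apply]
    rw [if_neg (by omega), add_zero]
    exact sum_eq_zero fun k _ => if_neg (by omega)
  have hdiag (i : Fin (N - r)) : (boundaryRecurrenceMatrix h a B).toBlocks₁₁ i i = C (a (-r)) := by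
    simp only [toBlocks₁₁, boundaryRecurrenceMatrix, submatrix_apply, id_eq, fromRows_apply_inl,
      recurrenceMatrix_apply, splitCols_inl_val, of_apply, Nat.left_eq_add]
    rw [if_neg (by omega), add_zero,
      Fintype.sum_eq_single ⟨0, hr⟩ fun k hk => if_neg fun h0 => hk (Fin.ext h0)]
    simp
  simp [det_of_isUpperTriangular htri, hdiag]

theorem det_fromRows_neg_shiftMatrix_ne_zero (h : r ≤ N) (B : Matrix (Fin r) (Fin N) K)
    (hB : IsUnit (of fun i j : Fin r => B i (Fin.castLE h j)).det) :
    ((fromRows (-shiftMatrix (N - r) N r) B).submatrix id (splitCols h)).det ≠ 0 := by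
  set e : Fin r ⊕ Fin (N - r) ≃ Fin N := finSumFinEquiv.trans (finCongr (Nat.add_sub_cancel' h))
  have hblocks : (fromRows (-shiftMatrix (N - r) N r) B).submatrix Sum.swap e =
      fromBlocks (of fun i j : Fin r => B i (Fin.castLE h j))
        (of fun i j => B i (e (Sum.inr j))) 0 (-1) := by
    ext (i | i) (j | j)
    · exact congrArg (B i) (Fin.ext (by simp [e]))
    · simp
    · simp [e, shiftMatrix, show (j : ℕ) ≠ i + r by omega]
    · simp [e, shiftMatrix, one_apply, Fin.ext_iff, add_comm, eq_comm]
  have hperm : (fromRows (-shiftMatrix (N - r) N r) B).submatrix id (splitCols h) =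
      ((fromRows (-shiftMatrix (N - r) N r) B).submatrix Sum.swap e).submatrix
        (Equiv.sumComm _ _) ((splitCols h).trans e.symm) := by
    ext i j
    simp
  rw [hperm, hblocks, det_submatrix_equiv_equiv, det_fromBlocks_zero₂₁, det_neg, det_one]
  refine mul_ne_zero ?_ (mul_ne_zero hB.ne_zero (by simp))
  exact ((Equiv.Perm.sign _).isUnit.map (Int.castRingHom K)).ne_zero

theorem natDegree_det_boundaryRecurrenceMatrix (h : r ≤ N) (a : ℤ → K)
    (B : Matrix (Fin r) (Fin N) K) (hB : IsUnit (of fun i j : Fin r => B i (Fin.castLE h j)).det) :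
    (boundaryRecurrenceMatrix h a B).det.natDegree = N - r := by
  have hsplit : boundaryRecurrenceMatrix h a B =
      (X : K[X]) • ((fromRows (-shiftMatrix (N - r) N r) 0).submatrix id (splitCols h)).map C +
        ((fromRows (recurrenceMatrix N r a 0) B).submatrix id (splitCols h)).map C := by
    rw [boundaryRecurrenceMatrix, recurrenceMatrix_C_X]
    ext (i | i) j : 1 <;> simp
  rw [hsplit, natDegree_det_X_smul_add_C_eq (univ.map Function.Embedding.inl)]
  · simp
  · rintro (i | i) hi
    · simp at hi
    · ext j
      simp
  · convert det_fromRows_neg_shiftMatrix_ne_zero h B hB using 2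
    ext (i | i) j <;> simp

theorem isUnit_det_toBlocks₁₁_boundaryRecurrenceMatrix (hr : 1 ≤ r) (h : r ≤ N) {a : ℤ → K}
    (ha : a (-r) ≠ 0) (B : Matrix (Fin r) (Fin N) K) :
    IsUnit (boundaryRecurrenceMatrix h a B).toBlocks₁₁.det := by
  rw [det_toBlocks₁₁_boundaryRecurrenceMatrix hr]
  exact (isUnit_C.mpr ha.isUnit).pow _

theorem natDegree_det_schurCompl₁₁_boundaryRecurrenceMatrix (hr : 1 ≤ r) (h : r ≤ N)
    {a : ℤ → K} (ha : a (-r) ≠ 0) (B : Matrix (Fin r) (Fin N) K)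
    (hB : IsUnit (of fun i j : Fin r => B i (Fin.castLE h j)).det) :
    (boundaryRecurrenceMatrix h a B).schurCompl₁₁.det.natDegree = N - r := by
  have hdet := det_eq_det_toBlocks₁₁_mul_det_schurCompl₁₁ _
    (isUnit_det_toBlocks₁₁_boundaryRecurrenceMatrix hr h ha B)
  rw [det_toBlocks₁₁_boundaryRecurrenceMatrix hr, ← C_pow] at hdet
  rw [← natDegree_C_mul (pow_ne_zero (N - r) ha), ← hdet,
    natDegree_det_boundaryRecurrenceMatrix h a B hB]

theorem mulVec_eq_map_eval_schurCompl₁₁_mulVec (hr : 1 ≤ r) (h : r ≤ N) {a : ℤ → K}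
    (ha : a (-r) ≠ 0) (B : Matrix (Fin r) (Fin N) K) (z : K) (U : Fin N → K)
    (hU : recurrenceMatrix N r a z *ᵥ U = 0) :
    B *ᵥ U = (boundaryRecurrenceMatrix h a B).schurCompl₁₁.map (eval z) *ᵥ
      fun k => U (splitCols h (Sum.inr k)) := by
  have hmap : (boundaryRecurrenceMatrix h a B).map (evalRingHom z) *ᵥ (U ∘ splitCols h) =
      Sum.elim (recurrenceMatrix N r a z *ᵥ U) (B *ᵥ U) := by
    have hz : (boundaryRecurrenceMatrix h a B).map (evalRingHom z) =
        (fromRows (recurrenceMatrix N r a z) B).submatrix id (splitCols h) := by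
      rw [boundaryRecurrenceMatrix, coe_evalRingHom, ← map_eval_recurrenceMatrix]
      ext (i | i) j <;> simp
    rw [hz, submatrix_mulVec_equiv, fromRows_mulVec, Function.comp_assoc, Equiv.self_comp_symm,
      Function.comp_id, Function.comp_id]
  have := mulVec_inr_eq_map_schurCompl₁₁ (evalRingHom z) _
    (isUnit_det_toBlocks₁₁_boundaryRecurrenceMatrix hr h ha B) (U ∘ splitCols h)
    (fun i => by rw [hmap, Sum.elim_inl, hU, Pi.zero_apply])
  rw [hmap] at this
  exact this

theorem zeroPadded_mulVec (h : r ≤ N) (D : Matrix (Fin r) (Fin r) K) (U : Fin N → K) :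
    (of fun i (j : Fin N) => if hj : (j : ℕ) < N - r then 0 else D i ⟨j - (N - r), by omega⟩) *ᵥ U =
      D *ᵥ fun k => U (splitCols h (Sum.inr k)) := by
  set M : Matrix (Fin r) (Fin N) K :=
    of fun i j => if hj : (j : ℕ) < N - r then 0 else D i ⟨j - (N - r), by omega⟩
  have hcols : M.submatrix id (splitCols h) = fromCols 0 D := by
    ext i (j | k) <;> simp [M]
  calc M *ᵥ U = M.submatrix id (splitCols h) *ᵥ (U ∘ splitCols h) := by
        rw [submatrix_mulVec_equiv, Function.comp_assoc, Equiv.self_comp_symm]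
        rfl
    _ = _ := by
        rw [hcols, fromCols_mulVec, zero_mulVec, zero_add]
        rfl

end Reduction

/-- Reduction lemma: if the leading `r×r` block of `B` is invertible, there exists an
`r×r` matrix `C(z)` with polynomial entries such that `B U = (0 | C(z)) U` for every
`U ∈ ℂ^N` satisfying the recurrence, and `det C(z)` has degree `N - r` in `z`. -/
theorem reduction_lemma (N r : ℕ) (hr : 1 ≤ r) (hN : r < N)
    (a : ℤ → ℂ) (ha : a (-(r:ℤ)) ≠ 0)
    (B : Matrix (Fin r) (Fin N) ℂ)
    (hB : IsUnit (Matrix.det (Matrix.of fun i j : Fin r => B i (Fin.castLE (by omega) j)))) :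
    ∃ C : Matrix (Fin r) (Fin r) (Polynomial ℂ),
      C.det.natDegree = N - r ∧
      ∀ z : ℂ, 1 ≤ ‖z‖ →
        ∀ U : Fin N → ℂ,
          (∀ j : ℕ, (hj : j < N - r) →
            (∑ k : Fin r, a ((k : ℤ) - r) * U ⟨j + (k : ℕ), by omega⟩)
              + (a 0 - z) * U ⟨j + r, by omega⟩ = 0) →
          B.mulVec U = (Matrix.of fun (i : Fin r) (j : Fin N) =>
            if h : (j : ℕ) < N - r then 0
            else (C i ⟨(j : ℕ) - (N - r), by omega⟩).eval z).mulVec U := by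
  refine ⟨(boundaryRecurrenceMatrix hN.le a B).schurCompl₁₁,
    natDegree_det_schurCompl₁₁_boundaryRecurrenceMatrix hr hN.le ha B hB, fun z _ U hU => ?_⟩
  have hrec : recurrenceMatrix N r a z *ᵥ U = 0 := by
    funext i
    rw [recurrenceMatrix_mulVec_apply hN.le]
    exact hU i i.2
  rw [mulVec_eq_map_eval_schurCompl₁₁_mulVec hr hN.le ha B z U hrec, ← zeroPadded_mulVec hN.le]
  rfl
end

section
/- Main theorem (explicit formula): Under the assumptions a_{-r} ≠ 0, totally upwind (p = 0), Cauchy-stability and consistency (which imply |a_0| < 1), the intrinsic Kreiss-Lopatinskii determinant Δ(z) = det(B K_{-r,m-1}(z)) / det K_{0,r-1}(z) satisfies, for all |z| ≥ 1, Δ(z) = (-1)^{r(m-r)} det C(z) · (a_{-r}/(a_0 − z))^{m−r}, where C(z) is the r×r polynomial matrix produced by the reduction lemma applied to the boundary matrix B ∈ M_{r,r+m}(ℂ). -/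
/-!
The columns of `K` are the sequences `n ↦ n^t κ^n` with `t < β(κ)`. Since `(X - κ)^β` divides
the characteristic polynomial, they solve the scheme's recurrence (each application of the Euler
operator `p ↦ s p + X p'` lowers the multiplicity of `κ` by one), so the reduction lemma gives
`B K_{-r,m-1} = C(z) K_{m-r,m-1}`. Shifting the window of a confluent Vandermonde matrix by one row
multiplies it by the companion matrix of `∏ (X - κ_j)^{β_j}`, of determinant
`∏ κ_j^{β_j} = (-1)^r a_{-r} / (a_0 - z)`. Finally `det K_{0,r-1} ≠ 0`: a polynomial of degree
`< r` vanishing to order `β_j` at every `κ_j` is zero.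
-/

open Matrix Polynomial Finset

namespace Polynomial

variable {R : Type*} [CommRing R]

noncomputable def eulerOp (s : R) (p : R[X]) : R[X] := C s * p + X * derivative p

lemma coeff_eulerOp (s : R) (p : R[X]) (n : ℕ) :
    (eulerOp s p).coeff n = (s + n) * p.coeff n := by
  rw [eulerOp, coeff_add, coeff_C_mul]
  cases n with
  | zero => simp
  | succ k => rw [coeff_X_mul, coeff_derivative]; push_cast; ring

lemma coeff_eulerOp_iterate (s : R) (t : ℕ) (p : R[X]) (n : ℕ) :
    ((eulerOp s)^[t] p).coeff n = (s + n) ^ t * p.coeff n := by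
  induction t generalizing p with
  | zero => simp
  | succ k ih => rw [Function.iterate_succ_apply, ih, coeff_eulerOp, pow_succ]; ring

lemma eval_eulerOp_iterate (s x : R) (t : ℕ) {p : R[X]} {d : ℕ} (hd : p.natDegree < d) :
    eval x ((eulerOp s)^[t] p) = ∑ i ∈ range d, (s + i) ^ t * p.coeff i * x ^ i := by
  have hdeg : ((eulerOp s)^[t] p).natDegree < d := by
    refine lt_of_le_of_lt (natDegree_le_iff_coeff_eq_zero.mpr fun n hn => ?_) hd
    rw [coeff_eulerOp_iterate, coeff_eq_zero_of_natDegree_lt hn, mul_zero]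
  simp only [eval_eq_sum_range' hdeg, coeff_eulerOp_iterate]

lemma pow_dvd_eulerOp_of_pow_succ_dvd {x : R} {b : ℕ} {p : R[X]} (s : R)
    (h : (X - C x) ^ (b + 1) ∣ p) :
    (X - C x) ^ b ∣ eulerOp s p := by
  obtain ⟨g, rfl⟩ := h
  have hb : (X - C x) ^ b ∣ (X - C x) ^ (b + 1) := pow_dvd_pow _ b.le_succ
  rw [eulerOp, derivative_mul, derivative_pow, derivative_X_sub_C, mul_one, mul_add,
    Nat.add_sub_cancel]
  refine dvd_add (dvd_mul_of_dvd_right (hb.mul_right g) _) (dvd_add ?_ ?_)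
  · exact dvd_mul_of_dvd_right (dvd_mul_of_dvd_left (dvd_mul_left _ _) g) X
  · exact dvd_mul_of_dvd_right (hb.mul_right _) X

lemma eval_eulerOp_iterate_eq_zero {x : R} {b t : ℕ} {p : R[X]} (s : R) (ht : t < b)
    (h : (X - C x) ^ b ∣ p) : eval x ((eulerOp s)^[t] p) = 0 := by
  induction t generalizing p b with
  | zero =>
    obtain ⟨g, rfl⟩ := h
    simp [zero_pow (Nat.pos_iff_ne_zero.mp ht)]
  | succ k ih =>
    rw [Function.iterate_succ_apply]
    exact ih (b := b - 1) (by omega)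
      (pow_dvd_eulerOp_of_pow_succ_dvd s (by rwa [Nat.sub_add_cancel (by omega)]))

lemma eval_eulerOp_zero_iterate_pow_mul (x : R) (t : ℕ) (g : R[X]) :
    eval x ((eulerOp 0)^[t] ((X - C x) ^ t * g)) = t.factorial * x ^ t * eval x g := by
  induction t generalizing g with
  | zero => simp
  | succ k ih =>
    have hstep : eulerOp 0 ((X - C x) ^ (k + 1) * g)
        = (X - C x) ^ k * ((k + 1 : R[X]) * X * g + (X - C x) * (X * derivative g)) := by
      rw [eulerOp, derivative_mul, derivative_pow, derivative_X_sub_C, Nat.add_sub_cancel]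
      simp only [C_0, zero_mul, mul_one, zero_add, Nat.cast_add, Nat.cast_one, C_add, C_1,
        ← C_eq_natCast]
      ring
    rw [Function.iterate_succ_apply, hstep, ih, Nat.factorial_succ]
    simp only [eval_add, eval_mul, eval_sub, eval_X, eval_C, sub_self, zero_mul, add_zero,
      eval_add, eval_one, eval_natCast]
    push_cast
    ring

lemma pow_dvd_of_eval_eulerOp_iterate_eq_zero [IsDomain R] [CharZero R] {x : R} (hx : x ≠ 0)
    {p : R[X]} {b : ℕ} (h : ∀ t < b, eval x ((eulerOp 0)^[t] p) = 0) : (X - C x) ^ b ∣ p := by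
  induction b with
  | zero => simp
  | succ k ih =>
    obtain ⟨g, rfl⟩ := ih fun t ht => h t (by omega)
    have hk := h k (by omega)
    rw [eval_eulerOp_zero_iterate_pow_mul] at hk
    have hg : g.IsRoot x := by
      simpa [Nat.factorial_ne_zero, hx] using hk
    rw [pow_succ]
    exact mul_dvd_mul_left _ (dvd_iff_isRoot.mpr hg)

end Polynomial

namespace Matrix

variable {R : Type*} [CommRing R]

def companion (n : ℕ) (q : R[X]) : Matrix (Fin n) (Fin n) R :=
  of fun i j => if (i : ℕ) + 1 < n then if (j : ℕ) = i + 1 then 1 else 0 else -q.coeff j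

lemma det_companion (n : ℕ) (q : R[X]) :
    (companion (n + 1) q).det = (-1) ^ (n + 1) * q.coeff 0 := by
  rw [det_succ_column_zero, Fintype.sum_eq_single (Fin.last n)]
  · have hid : (companion (n + 1) q).submatrix (Fin.last n).succAbove Fin.succ = 1 := by
      ext i j
      simp [companion, Fin.ext_iff, one_apply, eq_comm]
    rw [hid, det_one]
    simp [companion, pow_succ]
  · intro i hi
    have hin : (i : ℕ) + 1 < n + 1 := by have := Fin.val_lt_last hi; omega
    rw [companion, of_apply, if_pos hin, if_neg (by simp), mul_zero, zero_mul]

end Matrix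

section ConfluentVandermonde

variable {K : Type*} [Field K]

def polyExpSeq (x : K) (t : ℕ) (n : ℤ) : K := (n : K) ^ t * x ^ n

lemma sum_coeff_mul_polyExpSeq_eq_zero {x : K} (hx : x ≠ 0) {p : K[X]} {b t : ℕ}
    (hdvd : (X - C x) ^ b ∣ p) (ht : t < b) {d : ℕ} (hd : p.natDegree < d) (n : ℤ) :
    ∑ i ∈ range d, p.coeff i * polyExpSeq x t (i + n) = 0 := by
  have h := congrArg (· * x ^ n) (eval_eulerOp_iterate_eq_zero (n : K) ht hdvd)
  simp only [eval_eulerOp_iterate _ _ _ hd, sum_mul, zero_mul] at h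
  rw [← h]
  refine sum_congr rfl fun i _ => ?_
  rw [polyExpSeq, zpow_add₀ hx, zpow_natCast]
  push_cast
  ring

variable {M r : ℕ} {β : Fin M → ℕ}

lemma sum_eq_of_sigma_equiv (e : (Σ j, Fin (β j)) ≃ Fin r) : ∑ j, β j = r := by
  simpa using Fintype.card_congr e

lemma natDegree_prod_X_sub_C_pow (κ : Fin M → K) :
    (∏ j, (X - C (κ j)) ^ β j).natDegree = ∑ j, β j := by
  rw [natDegree_prod _ _ fun j _ => pow_ne_zero _ (X_sub_C_ne_zero _)]
  simp

lemma coeff_zero_prod_X_sub_C_pow (κ : Fin M → K) :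
    (∏ j, (X - C (κ j)) ^ β j).coeff 0 = (-1) ^ (∑ j, β j) * ∏ j, κ j ^ β j := by
  rw [coeff_zero_eq_eval_zero, eval_prod, ← prod_pow_eq_pow_sum, ← prod_mul_distrib]
  exact prod_congr rfl fun j _ => by rw [eval_pow, eval_sub, eval_X, eval_C, zero_sub, neg_pow]

def confluentVandermonde (κ : Fin M → K) (e : (Σ j, Fin (β j)) ≃ Fin r) (s : ℤ) :
    Matrix (Fin r) (Fin r) K :=
  of fun i c => polyExpSeq (κ (e.symm c).1) (e.symm c).2 (i + s)

lemma confluentVandermonde_add_one {κ : Fin M → K} (hκ : ∀ j, κ j ≠ 0)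
    (e : (Σ j, Fin (β j)) ≃ Fin r) (s : ℤ) :
    confluentVandermonde κ e (s + 1)
      = companion r (∏ j, (X - C (κ j)) ^ β j) * confluentVandermonde κ e s := by
  ext i c
  rw [mul_apply]
  by_cases hi : (i : ℕ) + 1 < r
  · rw [Fintype.sum_eq_single ⟨i + 1, hi⟩ fun j hj => by
      simp [companion, hi, Fin.ext_iff.not.mp hj]]
    simp [companion, confluentVandermonde, hi, add_assoc, add_comm (1 : ℤ)]
  · have hQmonic : (∏ j, (X - C (κ j)) ^ β j).Monic :=
      monic_prod_of_monic _ _ fun j _ => (monic_X_sub_C (κ j)).pow (β j)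
    have hQdeg : (∏ j, (X - C (κ j)) ^ β j).natDegree = r := by
      rw [natDegree_prod_X_sub_C_pow, sum_eq_of_sigma_equiv e]
    have hQr : (∏ j, (X - C (κ j)) ^ β j).coeff r = 1 := hQdeg ▸ hQmonic.coeff_natDegree
    have hrec := sum_coeff_mul_polyExpSeq_eq_zero (hκ (e.symm c).1)
      (dvd_prod_of_mem (fun j => (X - C (κ j)) ^ β j) (mem_univ (e.symm c).1)) (e.symm c).2.isLt
      (d := r + 1) (by omega) s
    rw [sum_range_succ, hQr, ← Fin.sum_univ_eq_sum_range] at hrec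
    have hir : (i : ℤ) + (s + 1) = r + s := by omega
    simp only [confluentVandermonde, companion, of_apply, if_neg hi, hir, neg_mul, sum_neg_distrib]
    linear_combination hrec

lemma det_confluentVandermonde_natCast {κ : Fin M → K} (hκ : ∀ j, κ j ≠ 0) (hr : 0 < r)
    (e : (Σ j, Fin (β j)) ≃ Fin r) (s : ℕ) :
    (confluentVandermonde κ e s).det
      = (∏ j, κ j ^ β j) ^ s * (confluentVandermonde κ e 0).det := by
  have hcomp : (companion r (∏ j, (X - C (κ j)) ^ β j)).det = ∏ j, κ j ^ β j := by
    obtain ⟨n, rfl⟩ := Nat.exists_eq_add_of_lt hr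
    rw [det_companion, coeff_zero_prod_X_sub_C_pow, sum_eq_of_sigma_equiv e, ← mul_assoc,
      ← mul_pow, neg_one_mul, neg_neg, one_pow, one_mul]
  induction s with
  | zero => simp
  | succ s ih =>
    rw [Nat.cast_succ, confluentVandermonde_add_one hκ, det_mul, hcomp, ih, pow_succ]
    ring

lemma det_confluentVandermonde_zero_ne_zero [CharZero K] {κ : Fin M → K}
    (hκ : ∀ j, κ j ≠ 0) (hinj : Function.Injective κ) (e : (Σ j, Fin (β j)) ≃ Fin r) :
    (confluentVandermonde κ e 0).det ≠ 0 := by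
  intro hdet
  obtain ⟨v, hv, hvV⟩ := exists_vecMul_eq_zero_iff.mpr hdet
  set p : K[X] := ∑ i : Fin r, C (v i) * X ^ (i : ℕ)
  have hpcoeff (i : Fin r) : p.coeff i = v i := by
    simp [p, coeff_C_mul, coeff_X_pow, Fin.val_inj]
  have hp : p ≠ 0 := fun h => hv (funext fun i => by rw [← hpcoeff, h, coeff_zero]; rfl)
  have hpdeg : p.natDegree < r := (natDegree_lt_iff_degree_lt hp).mpr (degree_sum_fin_lt v)
  have hdvd (j : Fin M) : (X - C (κ j)) ^ β j ∣ p := by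
    refine pow_dvd_of_eval_eulerOp_iterate_eq_zero (hκ j) fun t ht => ?_
    rw [eval_eulerOp_iterate 0 _ t hpdeg, ← Fin.sum_univ_eq_sum_range]
    have hcol := congrFun hvV (e ⟨j, t, ht⟩)
    have ht' : ((e.symm (e ⟨j, t, ht⟩)).2 : ℕ) = t := by rw [e.symm_apply_apply]
    simp only [vecMul, dotProduct, confluentVandermonde, of_apply, e.symm_apply_apply, ht'] at hcol
    refine Eq.trans (sum_congr rfl fun i _ => ?_) hcol
    simp only [polyExpSeq, hpcoeff, add_zero, zero_add, zpow_natCast, Int.cast_natCast]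
    ring
  have hQdvd : ∏ j, (X - C (κ j)) ^ β j ∣ p :=
    prod_dvd_of_coprime (fun i _ j _ hij => ((pairwise_coprime_X_sub_C hinj) hij).pow)
      fun j _ => hdvd j
  have := natDegree_le_of_dvd hQdvd hp
  rw [natDegree_prod_X_sub_C_pow, sum_eq_of_sigma_equiv e] at this
  omega

end ConfluentVandermonde

section RecurrencePoly

variable {R : Type*} [CommRing R]

noncomputable def recurrencePoly (r : ℕ) (a : ℤ → R) (z : R) : R[X] :=
  (∑ k ∈ Icc (-(r : ℤ)) 0, C (a k) * X ^ ((r : ℤ) + k).toNat) - C z * X ^ r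

lemma coeff_recurrencePoly (r : ℕ) (a : ℤ → R) (z : R) {i : ℕ} (hi : i ≤ r) :
    (recurrencePoly r a z).coeff i = a (i - r) - if i = r then z else 0 := by
  rw [recurrencePoly, coeff_sub, finsetSum_coeff, coeff_C_mul, coeff_X_pow,
    sum_eq_single ((i : ℤ) - r)]
  · rw [coeff_C_mul, coeff_X_pow, if_pos (by omega), mul_one, mul_ite, mul_one, mul_zero]
  · intro k hk hne
    rw [coeff_C_mul, coeff_X_pow, if_neg (by rw [mem_Icc] at hk; omega), mul_zero]
  · exact fun h => absurd (mem_Icc.mpr ⟨by omega, by omega⟩) h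

lemma natDegree_recurrencePoly_le (r : ℕ) (a : ℤ → R) (z : R) :
    (recurrencePoly r a z).natDegree ≤ r := by
  refine natDegree_le_iff_coeff_eq_zero.mpr fun N hN => ?_
  rw [recurrencePoly, coeff_sub, finsetSum_coeff, coeff_C_mul, coeff_X_pow, if_neg (by omega),
    mul_zero, sub_zero]
  refine sum_eq_zero fun k hk => ?_
  rw [coeff_C_mul, coeff_X_pow, if_neg (by rw [mem_Icc] at hk; omega), mul_zero]

lemma coeff_zero_recurrencePoly {r : ℕ} (hr : 0 < r) (a : ℤ → R) (z : R) :
    (recurrencePoly r a z).coeff 0 = a (-r) := by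
  rw [coeff_recurrencePoly r a z (Nat.zero_le r), if_neg hr.ne, sub_zero, Nat.cast_zero, zero_sub]

end RecurrencePoly

lemma sum_mul_polyExpSeq_eq_zero_of_dvd_recurrencePoly {K : Type*} [Field K] {r : ℕ}
    {a : ℤ → K} {z x : K} (hx : x ≠ 0) {b t : ℕ}
    (hdvd : (X - C x) ^ b ∣ recurrencePoly r a z) (ht : t < b) (n : ℤ) :
    ∑ k : Fin r, a (k - r) * polyExpSeq x t (k + n) + (a 0 - z) * polyExpSeq x t (r + n) = 0 := by
  have h := sum_coeff_mul_polyExpSeq_eq_zero hx hdvd ht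
    (Nat.lt_succ_of_le (natDegree_recurrencePoly_le r a z)) n
  rw [sum_range_succ, ← Fin.sum_univ_eq_sum_range, coeff_recurrencePoly r a z le_rfl] at h
  rw [← h]
  congr 1
  · refine sum_congr rfl fun k _ => ?_
    rw [coeff_recurrencePoly r a z k.isLt.le, if_neg k.isLt.ne, sub_zero]
  · simp

lemma mul_eq_mul_of_mulVec_col_eq {R l n o : Type*} [NonUnitalNonAssocSemiring R] [Fintype n]
    {A A' : Matrix l n R} {W : Matrix n o R}
    (h : ∀ c, A *ᵥ (fun i => W i c) = A' *ᵥ fun i => W i c) : A * W = A' * W :=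
  Matrix.ext fun i c => congrFun (h c) i

lemma of_dite_lt_mul {R ι : Type*} [NonUnitalNonAssocSemiring R] {r m : ℕ}
    (Cm : Matrix (Fin r) (Fin r) R) (W : Matrix (Fin (r + m)) ι R) :
    (of fun (i : Fin r) (j : Fin (r + m)) => if h : (j : ℕ) < m then 0
        else Cm i ⟨j - m, Nat.sub_lt_right_of_lt_add (not_lt.mp h) j.isLt⟩) * W
      = Cm * of fun (q : Fin r) c => W ⟨m + q, by omega⟩ c := by
  ext i c
  simp only [mul_apply, of_apply]
  symm
  refine Fintype.sum_of_injective (fun q : Fin r => (⟨m + q, by omega⟩ : Fin (r + m)))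
    (fun q q' h => by simpa [Fin.ext_iff] using h) _ _ (fun j hj => ?_) (fun q => by simp)
  have hjm : (j : ℕ) < m := by
    by_contra h
    exact hj ⟨⟨j - m, by omega⟩, Fin.ext (Nat.add_sub_cancel' (not_lt.mp h))⟩
  simp [hjm]

/-- Main theorem (explicit formula): under non-degeneracy, total upwinding,
Cauchy-stability and consistency, the intrinsic Kreiss-Lopatinskii determinant
`Δ(z) = det(B K_{-r,m-1}(z)) / det K_{0,r-1}(z)` equals
`(-1)^{r(m-r)} det C(z) (a_{-r}/(a₀-z))^{m-r}` for `|z| ≥ 1`. -/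
theorem intrinsic_KL_determinant_formula (r m M : ℕ) (hr : 1 ≤ r) (hrm : r ≤ m)
    (a : ℤ → ℂ) (ha : a (-(r:ℤ)) ≠ 0)
    (B : Matrix (Fin r) (Fin (r + m)) ℂ)
    (z : ℂ)
    -- roots of the characteristic equation, with multiplicities
    (κ : Fin M → ℂ) (hκ0 : ∀ j, κ j ≠ 0) (hinj : Function.Injective κ)
    (β : Fin M → ℕ)
    (hfact : (∑ k ∈ Finset.Icc (-(r:ℤ)) 0, C (a k) * X ^ ((r : ℤ) + k).toNat)
        - C z * X ^ r
      = C (a 0 - z) * ∏ j, (X - C (κ j)) ^ β j)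
    (e : (Σ j : Fin M, Fin (β j)) ≃ Fin r)
    -- the matrices K_{-r,m-1}(z) and K_{0,r-1}(z)
    (Kfull : Matrix (Fin (r + m)) (Fin r) ℂ)
    (hKfull : ∀ (i : Fin (r + m)) (c : Fin r),
      Kfull i c = (((i : ℤ) - r : ℤ) : ℂ) ^ ((e.symm c).2 : ℕ)
        * κ (e.symm c).1 ^ ((i : ℤ) - r))
    (K0 : Matrix (Fin r) (Fin r) ℂ)
    (hK0 : ∀ (i c : Fin r),
      K0 i c = ((i : ℕ) : ℂ) ^ ((e.symm c).2 : ℕ) * κ (e.symm c).1 ^ (i : ℕ))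
    -- the matrix C(z) produced by the reduction lemma
    (Cmat : Matrix (Fin r) (Fin r) ℂ)
    (hCmat : ∀ U : Fin (r + m) → ℂ,
      (∀ j : ℕ, (hj : j < m) →
        (∑ k : Fin r, a ((k : ℤ) - r) * U ⟨j + (k : ℕ), by omega⟩)
          + (a 0 - z) * U ⟨j + r, by omega⟩ = 0) →
      B.mulVec U = (Matrix.of fun (i : Fin r) (j : Fin (r + m)) =>
        if h : (j : ℕ) < m then 0 else Cmat i ⟨(j : ℕ) - m, by omega⟩).mulVec U) :
    (B * Kfull).det / K0.det
      = (-1) ^ (r * (m - r)) * Cmat.det * (a (-(r:ℤ)) / (a 0 - z)) ^ (m - r) := by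
  have hconst : a (-r) = (a 0 - z) * ((-1) ^ r * ∏ j, κ j ^ β j) := by
    have h : (recurrencePoly r a z).coeff 0 = _ := congrArg (coeff · 0) hfact
    rwa [coeff_zero_recurrencePoly hr, coeff_C_mul, coeff_zero_prod_X_sub_C_pow,
      sum_eq_of_sigma_equiv e] at h
  have haz : a 0 - z ≠ 0 := fun h => ha (by rw [hconst, h, zero_mul])
  have hKseq (i : Fin (r + m)) (c : Fin r) :
      Kfull i c = polyExpSeq (κ (e.symm c).1) (e.symm c).2 (i - r) := hKfull i c
  have hcol (c : Fin r) (j : ℕ) (hj : j < m) :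
      ∑ k : Fin r, a (k - r) * Kfull ⟨j + k, by omega⟩ c
        + (a 0 - z) * Kfull ⟨j + r, by omega⟩ c = 0 := by
    have hdvd : (X - C (κ (e.symm c).1)) ^ β (e.symm c).1 ∣ recurrencePoly r a z := by
      rw [recurrencePoly, hfact]; exact dvd_mul_of_dvd_right (dvd_prod_of_mem _ (mem_univ _)) _
    simp only [hKseq]
    convert sum_mul_polyExpSeq_eq_zero_of_dvd_recurrencePoly (hκ0 _) hdvd (e.symm c).2.isLt
      (j - r) using 5 <;> push_cast <;> ring
  have hmul : B * Kfull = Cmat * confluentVandermonde κ e (m - r : ℕ) := by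
    rw [mul_eq_mul_of_mulVec_col_eq fun c => hCmat _ (hcol c), of_dite_lt_mul]
    congr 1
    ext q c
    rw [of_apply, hKseq, confluentVandermonde, of_apply]
    congr 1
    push_cast [hrm]
    ring
  have hK0V : K0 = confluentVandermonde κ e 0 := by
    ext i c
    rw [hK0, confluentVandermonde, of_apply, polyExpSeq, add_zero, zpow_natCast, Int.cast_natCast]
  have hsign : ((-1 : ℂ) ^ (r * (m - r))) * (-1) ^ (r * (m - r)) = 1 := by
    rw [← pow_add]; exact Even.neg_one_pow ⟨_, rfl⟩
  rw [hmul, det_mul, det_confluentVandermonde_natCast hκ0 hr, ← hK0V,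
    div_eq_iff (hK0V ▸ det_confluentVandermonde_zero_ne_zero hκ0 hinj e), hconst,
    mul_div_cancel_left₀ _ haz, mul_pow, ← pow_mul]
  linear_combination (-(Cmat.det * (∏ j, κ j ^ β j) ^ (m - r) * K0.det)) * hsign
end
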